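/- If a horizontal line L(h) above the terrain T contains a point u that sees every point of T, then there exists a point u' on L(h) with x(v₁) ≤ x(u') ≤ x(vₙ) that also sees every point of T. -/

import Mathlib

/-!
Clamp the guard's abscissa into `[x(v₁), x(vₙ)]`. For every terrain point `p` the new guard
lies on `L(h)` between `p` and the old guard, and sliding a guard along `L(h)` towards `p`
only lowers the sight line `p u` above each abscissa, because `p` lies on or below `L(h)`.
-/

open Set

/-- An x-monotone polygonal terrain: vertices `x 0 < x 1 < ⋯ < x N` on the x-axis,
heights given by `f`, which is affine with slope `m i` and intercept `c i` on the
`i`-th edge. -/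
structure Terrain where
  N : ℕ
  hN : 1 ≤ N
  x : Fin (N + 1) → ℝ
  hx : StrictMono x
  f : ℝ → ℝ
  m : Fin N → ℝ
  c : Fin N → ℝ
  haff : ∀ i : Fin N, ∀ t ∈ Set.Icc (x i.castSucc) (x i.succ), f t = m i * t + c i

/-- Left endpoint of the domain of the terrain. -/
def Terrain.a (T : Terrain) : ℝ := T.x 0

/-- Right endpoint of the domain of the terrain. -/
def Terrain.b (T : Terrain) : ℝ := T.x (Fin.last T.N)

/-- Visibility: the segment from terrain point `p` to guard `u` stays on or above
the terrain. -/
def Terrain.Vis (T : Terrain) (p u : ℝ × ℝ) : Prop :=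
  ∀ q ∈ segment ℝ p u, q.1 ∈ Set.Icc T.a T.b → T.f q.1 ≤ q.2

/-- Full visibility of the `i`-th edge from the point `u`. -/
def Terrain.EdgeVis (T : Terrain) (i : Fin T.N) (u : ℝ × ℝ) : Prop :=
  ∀ t ∈ Set.Icc (T.x i.castSucc) (T.x i.succ), T.Vis (t, T.f t) u

/-- With `s' = p.1 + λ (s - p.1)`, the point `q = p + r • ((s', h) - p)` is matched by
`q' = p + (r λ) • ((s, h) - p)`; the drop in height uses `r λ ≤ r` and `p.2 ≤ h`. -/
lemma exists_mem_segment_fst_eq_snd_le {p q : ℝ × ℝ} {h s s' : ℝ} (hp : p.2 ≤ h)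
    (hs' : s' ∈ segment ℝ p.1 s) (hq : q ∈ segment ℝ p (s', h)) :
    ∃ q' ∈ segment ℝ p (s, h), q'.1 = q.1 ∧ q'.2 ≤ q.2 := by
  obtain ⟨l, ⟨hl0, hl1⟩, rfl⟩ := (segment_eq_image ℝ p.1 s ▸ hs')
  obtain ⟨r, ⟨hr0, hr1⟩, rfl⟩ := (segment_eq_image ℝ p _ ▸ hq)
  have hrl : r * l ≤ r := mul_le_of_le_one_right hr0 hl1
  refine ⟨AffineMap.lineMap p (s, h) (r * l), ?_, ?_, ?_⟩
  · rw [segment_eq_image_lineMap]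
    exact ⟨r * l, ⟨mul_nonneg hr0 hl0, hrl.trans hr1⟩, rfl⟩
  · simp only [AffineMap.lineMap_apply_module, Prod.fst_add, Prod.smul_fst, smul_eq_mul]
    ring
  · simp only [AffineMap.lineMap_apply_module, Prod.snd_add, Prod.smul_snd, smul_eq_mul]
    nlinarith

lemma Terrain.Vis.of_mem_segment_fst {T : Terrain} {p : ℝ × ℝ} {h s s' : ℝ}
    (hvis : T.Vis p (s, h)) (hp : p.2 ≤ h) (hs' : s' ∈ segment ℝ p.1 s) :
    T.Vis p (s', h) := by
  intro q hq hq1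
  obtain ⟨q', hq', hfst, hsnd⟩ := exists_mem_segment_fst_eq_snd_le hp hs' hq
  exact (hfst ▸ hvis q' hq' (hfst ▸ hq1)).trans hsnd

lemma max_min_mem_uIcc {a b t s : ℝ} (ht : t ∈ Icc a b) : max a (min s b) ∈ uIcc t s := by
  rw [mem_uIcc]
  rcases le_total t s with hts | hst
  · exact .inl ⟨le_max_of_le_right (le_min hts ht.2),
      max_le (ht.1.trans hts) (min_le_left _ _)⟩
  · exact .inr ⟨le_max_of_le_right (le_min le_rfl (hst.trans ht.2)),
      max_le ht.1 ((min_le_left _ _).trans hst)⟩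

/-- If some point of the horizontal line `L(h)` above `T` sees every point of `T`,
then some point `u'` of `L(h)` with `x(v₁) ≤ x(u') ≤ x(vₙ)` sees every point of `T`. -/
theorem stmt10 (T : Terrain) (h : ℝ)
    (hh : ∀ t ∈ Set.Icc T.a T.b, T.f t ≤ h)
    (u : ℝ × ℝ) (hu : u.2 = h)
    (hsee : ∀ t ∈ Set.Icc T.a T.b, T.Vis (t, T.f t) u) :
    ∃ u' : ℝ × ℝ, u'.2 = h ∧ T.a ≤ u'.1 ∧ u'.1 ≤ T.b ∧
      ∀ t ∈ Set.Icc T.a T.b, T.Vis (t, T.f t) u' := by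
  have hab : T.a ≤ T.b := T.hx.monotone (Fin.zero_le _)
  refine ⟨(max T.a (min u.1 T.b), h), rfl, le_max_left _ _,
    max_le hab (min_le_right _ _), fun t ht => ?_⟩
  have hvis : T.Vis (t, T.f t) (u.1, h) := hu ▸ hsee t ht
  refine hvis.of_mem_segment_fst (hh t ht) ?_
  rw [segment_eq_uIcc]
  exact max_min_mem_uIcc ht
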